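/- arXiv:math/0609731 — 3 statements merged into one kernel-verified Lean document; each statement's English description precedes it below -/
import Mathlib

section
/- Let E_N denote the set of Pareto-efficient points of S for the objective I : S → (Fin N → ℝ), and E_{N+1} the set of Pareto-efficient points for the extended objective (I, J) : S → (Fin N → ℝ) × ℝ. Then E_N ⊆ E_{N+1} if and only if for every s ∈ E_N and every s' ∈ S, I(s') = I(s) implies J(s') = J(s). -/
/-- Pareto-efficient set of `F` on `S`: points of `S` not dominated by any point of `S`. -/
def EffSet {α β : Type*} [Preorder β] (S : Set α) (F : α → β) : Set α :=
  {s | s ∈ S ∧ ¬ ∃ s' ∈ S, F s' ≤ F s ∧ F s' ≠ F s}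

/-- Extended objective `(I, J)`. -/
def ExtObj {α : Type*} {N : ℕ} (I : α → Fin N → ℝ) (J : α → ℝ) : α → (Fin N → ℝ) × ℝ :=
  fun s => (I s, J s)


theorem eff_subset_iff_constant_on_level_sets {α : Type*} {N : ℕ} (hN : 0 < N)
    (S : Set α) (I : α → Fin N → ℝ) (J : α → ℝ) :
    EffSet S I ⊆ EffSet S (ExtObj I J) ↔
      ∀ s ∈ EffSet S I, ∀ s' ∈ S, I s' = I s → J s' = J s := by
  constructor
  · intro h s hs s' hs' hI
    by_contra hne
    rcases lt_or_gt_of_ne hne with hlt | hgt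
    · exact (h hs).2 ⟨s', hs', ⟨hI.le, hlt.le⟩, by
        simp [ExtObj, Prod.ext_iff, hlt.ne]⟩
    · have hs'eff : s' ∈ EffSet S I := by
        refine ⟨hs', fun ⟨t, ht, hle, hneq⟩ => hs.2 ⟨t, ht, ?_, ?_⟩⟩
        · rw [← hI]; exact hle
        · rw [← hI]; exact hneq
      exact (h hs'eff).2 ⟨s, hs.1, ⟨hI.ge, hgt.le⟩, by
        simp only [ExtObj, Ne, Prod.ext_iff, not_and]
        exact fun _ => hgt.ne⟩
  · intro h s hs
    refine ⟨hs.1, fun ⟨s', hs', hle, hneq⟩ => ?_⟩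
    have hIle : I s' ≤ I s := hle.1
    by_cases hI : I s' = I s
    · exact hneq (Prod.ext hI (h s hs s' hs' hI))
    · exact hs.2 ⟨s', hs', hIle, hI⟩
end

section
/- If J = f ∘ I where f : (Fin N → ℝ) → ℝ is nondecreasing on the image I(S) (i.e., for y¹, y² ∈ I(S), y¹ ≤ y² componentwise implies f(y¹) ≤ f(y²)), then the set of Pareto-efficient points of S for I equals the set of Pareto-efficient points of S for the extended objective (I, J); that is, J is a nonessential objective. -/
theorem nondecreasing_factoring_nonessential {α : Type*} {N : ℕ} (hN : 0 < N)
    (S : Set α) (I : α → Fin N → ℝ) (f : (Fin N → ℝ) → ℝ)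
    (hf : ∀ s ∈ S, ∀ s' ∈ S, I s ≤ I s' → f (I s) ≤ f (I s')) :
    EffSet S (ExtObj I (f ∘ I)) = EffSet S I := by
  ext s
  constructor
  · rintro ⟨hs, h⟩
    refine ⟨hs, fun ⟨s', hs', hle, hne⟩ => h ⟨s', hs', ⟨hle, hf s' hs' s hs hle⟩, fun hp => ?_⟩⟩
    exact hne (congrArg Prod.fst hp)
  · rintro ⟨hs, h⟩
    refine ⟨hs, fun ⟨s', hs', hle, hne⟩ => h ⟨s', hs', hle.1, fun h1 => ?_⟩⟩
    exact hne (Prod.ext h1 (by simp [ExtObj] at h1 ⊢; rw [h1]))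
end

section
/- The p-norm distance to the ideal point is nonessential: if a : Fin N → ℝ satisfies aᵢ ≤ Iᵢ(s) for all s ∈ S and i, and J(s) = (∑ᵢ (Iᵢ(s) − aᵢ)^p)^(1/p) for some real p ≥ 1, then the Pareto-efficient set of S for (I, J) equals the Pareto-efficient set of S for I. -/
theorem p_norm_distance_nonessential {α : Type*} {N : ℕ} (hN : 0 < N)
    (S : Set α) (I : α → Fin N → ℝ) (a : Fin N → ℝ)
    (ha : ∀ s ∈ S, ∀ i, a i ≤ I s i) (p : ℝ) (hp : 1 ≤ p) :
    EffSet S (ExtObj I (fun s => (∑ i, (I s i - a i) ^ p) ^ (1 / p))) = EffSet S I := by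
  set J : α → ℝ := fun s => (∑ i, (I s i - a i) ^ p) ^ (1 / p) with hJ
  have hmono : ∀ s ∈ S, ∀ s' ∈ S, I s' ≤ I s → J s' ≤ J s := by
    intro s hs s' hs' hle
    apply Real.rpow_le_rpow
    · exact Finset.sum_nonneg fun i _ =>
        Real.rpow_nonneg (by linarith [ha s' hs' i]) p
    · apply Finset.sum_le_sum
      intro i _
      exact Real.rpow_le_rpow (by linarith [ha s' hs' i]) (by linarith [hle i]) (by linarith)
    · positivity
  ext s
  simp only [EffSet, ExtObj, Set.mem_setOf_eq]
  constructor
  · rintro ⟨hs, hnd⟩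
    refine ⟨hs, fun ⟨s', hs', hle, hne⟩ => hnd ⟨s', hs', ⟨hle, hmono s hs s' hs' hle⟩, ?_⟩⟩
    simp only [Prod.mk.injEq, ne_eq, not_and]
    intro h; exact absurd h hne
  · rintro ⟨hs, hnd⟩
    refine ⟨hs, fun ⟨s', hs', hle, hne⟩ => hnd ⟨s', hs', hle.1, fun h => hne ?_⟩⟩
    simp only [Prod.mk.injEq]
    exact ⟨h, by rw [hJ]; simp [show I s' = I s from h]⟩
end
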